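/- arXiv:1409.1107 — 3 statements merged into one kernel-verified Lean document; each statement's English description precedes it below -/
import Mathlib

section
/- Let (α, g, β) be a nonzero element of S_{G,E} and (γ, 1, γ) a nonzero idempotent. Then (γ, 1, γ) ≤ (α, g, β) in the natural order (i.e., (α,g,β)·(γ,1,γ) = (γ,1,γ)) if and only if: α = β, γ = ατ for some finite path τ, and τ is strongly fixed by g (g·τ = τ and φ(g,τ) = 1). -/
/-!
Only the branch of the product in which `β` is a prefix of `γ = βτ` can return `(γ, 1, γ)`,
and there the product is `(α (g·τ), φ(g, τ), γ)`. Since `g·τ` has the length of `τ`,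
`α (g·τ) = β τ` forces `α = β` and `g·τ = τ`.
-/


/-- A self-similar structure on the finite path space of a directed graph:
`P` is the set of finite paths `E*`, `V` the vertices, and a group `G` acts on
paths by length-preserving bijections together with a one-cocycle `coc` (φ),
satisfying the relations (2.5) of Exel–Pardo.  `comp α β` is the concatenation
`αβ` (meaningful when `src α = rng β`), `vert x` is the length-zero path at the
vertex `x`, `vact` is the induced action on vertices. -/
structure SSG (G V P : Type*) [Group G] where
  len : P → ℕ
  src : P → V
  rng : P → V
  comp : P → P → P
  vert : V → P
  vact : G → V → V
  act : G → P → P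
  coc : G → P → G
  len_vert : ∀ x, len (vert x) = 0
  src_vert : ∀ x, src (vert x) = x
  rng_vert : ∀ x, rng (vert x) = x
  eq_vert_of_len_zero : ∀ p, len p = 0 → p = vert (src p)
  len_comp : ∀ α β, src α = rng β → len (comp α β) = len α + len β
  src_comp : ∀ α β, src α = rng β → src (comp α β) = src β
  rng_comp : ∀ α β, src α = rng β → rng (comp α β) = rng α
  comp_vert_right : ∀ α, comp α (vert (src α)) = α
  comp_vert_left : ∀ β, comp (vert (rng β)) β = β
  comp_assoc : ∀ α β γ, src α = rng β → src β = rng γ →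
    comp (comp α β) γ = comp α (comp β γ)
  comp_inj : ∀ α β α' β', src α = rng β → src α' = rng β' → len α = len α' →
    comp α β = comp α' β' → α = α' ∧ β = β'
  decomp : ∀ p, 1 ≤ len p → ∃ e q, len e = 1 ∧ src e = rng q ∧ p = comp e q
  act_one : ∀ p, act 1 p = p
  act_mul : ∀ g h p, act (g * h) p = act g (act h p)
  vact_one : ∀ x, vact 1 x = x
  vact_mul : ∀ g h x, vact (g * h) x = vact g (vact h x)
  len_act : ∀ g p, len (act g p) = len p
  src_act : ∀ g p, src (act g p) = vact g (src p)
  rng_act : ∀ g p, rng (act g p) = vact g (rng p)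
  act_vert : ∀ g x, act g (vert x) = vert (vact g x)
  coc_vert : ∀ g x, coc g (vert x) = g
  coc_mul : ∀ g h p, coc (g * h) p = coc g (act h p) * coc h p
  act_comp : ∀ g α β, src α = rng β →
    act g (comp α β) = comp (act g α) (act (coc g α) β)
  coc_comp : ∀ g α β, src α = rng β → coc g (comp α β) = coc (coc g α) β
  vact_coc : ∀ g p x, vact (coc g p) x = vact g x

namespace SSG

variable {G V P : Type*} [Group G]

/-- A path is strongly fixed by `g` if `g` fixes it and the cocycle is trivial on it. -/
def StronglyFixed (S : SSG G V P) (g : G) (p : P) : Prop :=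
  S.act g p = p ∧ S.coc g p = 1

/-- Pseudo freeness: no nontrivial group element strongly fixes an edge. -/
def PseudoFree (S : SSG G V P) : Prop :=
  ∀ (g : G) (e : P), S.len e = 1 → S.act g e = e → S.coc g e = 1 → g = 1

end SSG
namespace SSG

variable {G V P : Type*} [Group G]

open scoped Classical in
/-- Multiplication of the inverse semigroup `S_{G,E}`; `none` plays the role of `0`. -/
noncomputable def smul (S : SSG G V P) :
    Option (P × G × P) → Option (P × G × P) → Option (P × G × P)
  | some (α, g, β), some (γ, h, δ) =>
    if h1 : ∃ ε, S.src β = S.rng ε ∧ γ = S.comp β ε then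
      some (S.comp α (S.act g h1.choose), S.coc g h1.choose * h, δ)
    else if h2 : ∃ ε, S.src γ = S.rng ε ∧ β = S.comp γ ε then
      some (α, g * (S.coc h⁻¹ h2.choose)⁻¹, S.comp δ (S.act h⁻¹ h2.choose))
    else none
  | _, _ => none

/-- The involution of `S_{G,E}`. -/
def sstar (_S : SSG G V P) : Option (P × G × P) → Option (P × G × P)
  | some (α, g, β) => some (β, g⁻¹, α)
  | none => none

/-- Membership in `S_{G,E}`: the defining condition `d α = g • d β`. -/
def Mem (S : SSG G V P) : Option (P × G × P) → Prop
  | some (α, g, β) => S.src α = S.vact g (S.src β)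
  | none => True

end SSG

namespace SSG

variable {G V P : Type*} [Group G] (S : SSG G V P)

theorem comp_inj_of_len_right {α β α' β' : P} (h : S.src α = S.rng β)
    (h' : S.src α' = S.rng β') (hlen : S.len β = S.len β') (heq : S.comp α β = S.comp α' β') :
    α = α' ∧ β = β' := by
  have hlen' := S.len_comp α β h
  rw [heq, S.len_comp α' β' h', hlen] at hlen'
  exact S.comp_inj α β α' β' h h' (by omega) heq

theorem comp_left_cancel {α ε ε' : P} (h : S.src α = S.rng ε) (h' : S.src α = S.rng ε')
    (heq : S.comp α ε = S.comp α ε') : ε = ε' :=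
  (S.comp_inj α ε α ε' h h' rfl heq).2

theorem eq_vert_of_comp_eq_self {γ ε : P} (h : S.src γ = S.rng ε) (heq : S.comp γ ε = γ) :
    ε = S.vert (S.src γ) :=
  S.comp_left_cancel h (S.rng_vert _).symm (by rw [heq, S.comp_vert_right])

theorem smul_of_eq_comp {α β γ δ ε : P} {g h : G} (hε : S.src β = S.rng ε)
    (hγ : γ = S.comp β ε) :
    S.smul (some (α, g, β)) (some (γ, h, δ)) =
      some (S.comp α (S.act g ε), S.coc g ε * h, δ) := by
  classical
  have hpre : ∃ ε, S.src β = S.rng ε ∧ γ = S.comp β ε := ⟨ε, hε, hγ⟩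
  obtain ⟨hε', hγ'⟩ := hpre.choose_spec
  have hchoose : hpre.choose = ε := S.comp_left_cancel hε' hε (hγ' ▸ hγ)
  simp only [smul, dif_pos hpre, hchoose]

/-- If `β` is not a prefix of `γ`, the product takes its second branch `β = γε`, whose last
component `γε` equals `γ` only for trivial `ε`; but then `β = γ` is a prefix after all. -/
theorem exists_eq_comp_of_smul_eq_self {α β γ : P} {g : G}
    (hle : S.smul (some (α, g, β)) (some (γ, 1, γ)) = some (γ, 1, γ)) :
    ∃ ε, S.src β = S.rng ε ∧ γ = S.comp β ε := by
  classical
  by_contra hne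
  simp only [smul] at hle
  rw [dif_neg hne] at hle
  split_ifs at hle with hsuf
  obtain ⟨hε, hβ⟩ := hsuf.choose_spec
  have hcomp : S.comp γ hsuf.choose = γ := by
    simp only [inv_one, S.act_one, Option.some.injEq, Prod.mk.injEq] at hle
    exact hle.2.2
  rw [S.eq_vert_of_comp_eq_self hε hcomp, S.comp_vert_right] at hβ
  exact hne ⟨S.vert (S.src β), (S.rng_vert _).symm, by rw [S.comp_vert_right, hβ]⟩

end SSG

/-- For a nonzero `s = (α, g, β)` in `S_{G,E}` and a nonzero idempotent `e = (γ, 1, γ)`,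
one has `e ≤ s` (i.e. `s·e = e`) if and only if `α = β`, `γ = ατ` for some finite path
`τ`, and `τ` is strongly fixed by `g` (`g·τ = τ` and `φ(g, τ) = 1`). -/
theorem stmt9 {G V P : Type*} [Group G] (S : SSG G V P) (α β γ : P) (g : G)
    (hmem : S.src α = S.vact g (S.src β)) :
    S.smul (some (α, g, β)) (some (γ, (1 : G), γ)) = some (γ, (1 : G), γ) ↔
      α = β ∧ ∃ τ, S.src α = S.rng τ ∧ γ = S.comp α τ ∧
        S.act g τ = τ ∧ S.coc g τ = 1 := by
  constructor
  · intro hle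
    obtain ⟨τ, hτ, hγ⟩ := S.exists_eq_comp_of_smul_eq_self hle
    rw [S.smul_of_eq_comp hτ hγ, Option.some.injEq, Prod.mk.injEq, Prod.mk.injEq, mul_one]
      at hle
    obtain ⟨hαγ, hcoc, -⟩ := hle
    have hsrc : S.src α = S.rng (S.act g τ) := by rw [hmem, hτ, S.rng_act]
    obtain ⟨rfl, hact⟩ :=
      S.comp_inj_of_len_right hsrc hτ (S.len_act g τ) (hαγ.trans hγ)
    exact ⟨rfl, τ, hτ, hγ, hact, hcoc⟩
  · rintro ⟨rfl, τ, hτ, hγ, hact, hcoc⟩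
    rw [S.smul_of_eq_comp hτ hγ, hact, hcoc, one_mul, ← hγ]
end

section
/- Let s = (α, g, β) ∈ S_{G,E} with |α| > |β|, acting on infinite paths by (α,g,β)·(βξ) = α·(g·ξ). If ζ is a fixed point of s, then β is a prefix of α, say α = βγ with (g, γ) a G-circuit, and ζ = β·ξ where ξ = γ¹γ²γ³⋯ is the infinite path built from the G-circuit (g, γ) by γ¹ = γ, g₁ = g, γ^{n+1} = g_n·γ^n, g_{n+1} = φ(g_n, γ^n). In particular, s has at most one fixed point. -/
namespace SSG

variable {G V P : Type*} [Group G]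

/-- An infinite path, encoded by its sequence of finite prefixes `ξ n = ξ|_n`:
the `n`-th prefix has length `n`, and each prefix extends the previous one by an edge. -/
def IsInfPath (S : SSG G V P) (ξ : ℕ → P) : Prop :=
  (∀ n, S.len (ξ n) = n) ∧
  ∀ n, ∃ e, S.len e = 1 ∧ S.src (ξ n) = S.rng e ∧ ξ (n + 1) = S.comp (ξ n) e

/-- `Phi S g ξ n = φ(g, ξ|_n)`, the sequence of cocycle values along an infinite path
(0-indexed version of the map `Φ` of Definition 8.9). -/
def Phi (S : SSG G V P) (g : G) (ξ : ℕ → P) : ℕ → G := fun n => S.coc g (ξ n)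

/-- The action of `G` on infinite paths, prefixwise: `(g·ξ)|_n = g·(ξ|_n)`. -/
def actInf (S : SSG G V P) (g : G) (ξ : ℕ → P) : ℕ → P := fun n => S.act g (ξ n)

end SSG
namespace SSG

variable {G V P : Type*} [Group G]

/-- The recursive sequence `(γⁿ⁺¹, gₙ₊₁)` attached to a `G`-circuit `(g, γ)`:
`γ¹ = γ`, `g₁ = g`, `γⁿ⁺¹ = gₙ·γⁿ`, `gₙ₊₁ = φ(gₙ, γⁿ)` (0-indexed here). -/
def circSeq (S : SSG G V P) (g : G) (γ : P) : ℕ → P × G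
  | 0 => (γ, g)
  | n + 1 =>
      (S.act (circSeq S g γ n).2 (circSeq S g γ n).1,
       S.coc (circSeq S g γ n).2 (circSeq S g γ n).1)

/-- The partial concatenations `γ¹γ²⋯γⁿ` of the paths attached to a `G`-circuit,
i.e. the prefixes of the infinite path `ξ = γ¹γ²γ³⋯`. -/
def partConcat (S : SSG G V P) (g : G) (γ : P) : ℕ → P
  | 0 => S.vert (S.rng γ)
  | n + 1 => S.comp (partConcat S g γ n) (circSeq S g γ n).1

end SSG

namespace SSG

variable {G V P : Type*} [Group G]

/-- `ζ` is a fixed point of the element `s = (α, g, β)` of `S_{G,E}` acting on `E^∞`: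
`ζ` is an infinite path lying in the cylinder `Z(β)`, say `ζ = βξ`, and
`s·ζ = α(g·ξ) = ζ` (equality of infinite paths expressed via their prefixes). -/
def FixedPt (S : SSG G V P) (α : P) (g : G) (β : P) (ζ : ℕ → P) : Prop :=
  S.IsInfPath ζ ∧ ∃ ξ : ℕ → P, S.IsInfPath ξ ∧ S.src β = S.rng (ξ 0) ∧
    (∀ k, ζ (S.len β + k) = S.comp β (ξ k)) ∧
    (∀ k, ζ (S.len α + k) = S.comp α (S.act g (ξ k)))

end SSG

/-
If `ζ = βξ` is fixed, then `α(g·ξ) = βξ`; comparing prefixes of length `|α|` gives `α = βγ` with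
`γ = ξ|_{|γ|}`, and cancelling `β` turns the fixed-point equation into the shift relation
`ξ = γ(g·ξ)`. Unwinding it with the cocycle identities shows that the prefixes of `ξ` of length
`n|γ|` are `γ¹⋯γⁿ`, so `ξ`, and hence `ζ`, is determined by `(α, g, β)`.
-/

namespace SSG

variable {G V P : Type*} [Group G] {S : SSG G V P}

namespace IsInfPath

variable {ξ ξ' : ℕ → P}

lemma rng_eq_rng_zero (hξ : S.IsInfPath ξ) (n : ℕ) : S.rng (ξ n) = S.rng (ξ 0) := by
  induction n with
  | zero => rfl
  | succ n ih =>
    obtain ⟨e, -, he, hsucc⟩ := hξ.2 n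
    rw [hsucc, S.rng_comp _ _ he, ih]

lemma zero_eq_vert (hξ : S.IsInfPath ξ) : ξ 0 = S.vert (S.rng (ξ 0)) := by
  have h0 := S.eq_vert_of_len_zero _ (hξ.1 0)
  have hrng : S.rng (ξ 0) = S.src (ξ 0) := by
    rw [congrArg S.rng h0, S.rng_vert]
  rwa [hrng]

lemma exists_add_eq_comp (hξ : S.IsInfPath ξ) (n k : ℕ) :
    ∃ q, S.src (ξ n) = S.rng q ∧ ξ (n + k) = S.comp (ξ n) q := by
  induction k with
  | zero => exact ⟨S.vert (S.src (ξ n)), (S.rng_vert _).symm, (S.comp_vert_right _).symm⟩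
  | succ k ih =>
    obtain ⟨q, hq, hnk⟩ := ih
    obtain ⟨e, -, he, hsucc⟩ := hξ.2 (n + k)
    rw [hnk, S.src_comp _ _ hq] at he
    refine ⟨S.comp q e, by rw [S.rng_comp _ _ he, hq], ?_⟩
    rw [← Nat.add_assoc, hsucc, hnk, S.comp_assoc _ _ _ hq he]

lemma ext_of_unbounded (hξ : S.IsInfPath ξ) (hξ' : S.IsInfPath ξ')
    (hagree : ∀ n, ∃ N, n ≤ N ∧ ξ N = ξ' N) : ξ = ξ' := by
  funext n
  obtain ⟨N, hnN, hN⟩ := hagree n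
  obtain ⟨k, rfl⟩ := Nat.exists_eq_add_of_le hnN
  obtain ⟨q, hq, hξq⟩ := hξ.exists_add_eq_comp n k
  obtain ⟨q', hq', hξq'⟩ := hξ'.exists_add_eq_comp n k
  rw [hξq, hξq'] at hN
  exact (S.comp_inj _ _ _ _ hq hq' (by rw [hξ.1 n, hξ'.1 n]) hN).1

end IsInfPath

section Circuit

variable (S) {g : G} {γ : P}

lemma src_circSeq_fst (hγ : S.src γ = S.vact g (S.rng γ)) (n : ℕ) :
    S.src (S.circSeq g γ n).1 = S.vact (S.circSeq g γ n).2 (S.rng (S.circSeq g γ n).1) := by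
  induction n with
  | zero => exact hγ
  | succ n ih => rw [circSeq, S.src_act, S.rng_act, S.vact_coc, ih]

lemma src_partConcat (hγ : S.src γ = S.vact g (S.rng γ)) (n : ℕ) :
    S.src (S.partConcat g γ n) = S.rng (S.circSeq g γ n).1 := by
  induction n with
  | zero => exact S.src_vert _
  | succ n ih =>
    rw [partConcat, S.src_comp _ _ ih, circSeq, S.rng_act, S.src_circSeq_fst hγ n]

lemma rng_partConcat (hγ : S.src γ = S.vact g (S.rng γ)) (n : ℕ) :
    S.rng (S.partConcat g γ n) = S.rng γ := by
  induction n with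
  | zero => exact S.rng_vert _
  | succ n ih => rw [partConcat, S.rng_comp _ _ (S.src_partConcat hγ n), ih]

lemma coc_partConcat (hγ : S.src γ = S.vact g (S.rng γ)) (n : ℕ) :
    S.coc g (S.partConcat g γ n) = (S.circSeq g γ n).2 := by
  induction n with
  | zero => exact S.coc_vert _ _
  | succ n ih => rw [partConcat, S.coc_comp _ _ _ (S.src_partConcat hγ n), ih]; rfl

lemma act_partConcat_succ (hγ : S.src γ = S.vact g (S.rng γ)) (n : ℕ) :
    S.act g (S.partConcat g γ (n + 1)) =
      S.comp (S.act g (S.partConcat g γ n)) (S.circSeq g γ (n + 1)).1 := by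
  rw [partConcat, S.act_comp _ _ _ (S.src_partConcat hγ n), S.coc_partConcat hγ n]
  rfl

lemma partConcat_succ (hγ : S.src γ = S.vact g (S.rng γ)) (n : ℕ) :
    S.partConcat g γ (n + 1) = S.comp γ (S.act g (S.partConcat g γ n)) := by
  induction n with
  | zero =>
    show S.comp (S.vert (S.rng γ)) γ = S.comp γ (S.act g (S.vert (S.rng γ)))
    rw [S.act_vert, ← hγ, S.comp_vert_right, S.comp_vert_left]
  | succ n ih =>
    have hγ_act : S.src γ = S.rng (S.act g (S.partConcat g γ n)) := by
      rw [S.rng_act, S.rng_partConcat hγ n, hγ]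
    have hact_next :
        S.src (S.act g (S.partConcat g γ n)) = S.rng (S.circSeq g γ (n + 1)).1 := by
      rw [S.src_act, S.src_partConcat hγ n, circSeq, S.rng_act, ← S.coc_partConcat hγ n,
        S.vact_coc]
    rw [S.act_partConcat_succ hγ n, ← S.comp_assoc _ _ _ hγ_act hact_next, ← ih]
    rfl

lemma eq_partConcat_of_shift (hγ : S.src γ = S.vact g (S.rng γ)) {ξ : ℕ → P}
    (h0 : ξ 0 = S.vert (S.rng γ))
    (hshift : ∀ k, ξ (S.len γ + k) = S.comp γ (S.act g (ξ k))) (n : ℕ) :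
    ξ (n * S.len γ) = S.partConcat g γ n := by
  induction n with
  | zero => rw [Nat.zero_mul, h0, partConcat]
  | succ n ih => rw [Nat.succ_mul, Nat.add_comm, hshift, ih, S.partConcat_succ hγ]

end Circuit

namespace FixedPt

variable {α β : P} {g : G} {ζ : ℕ → P}

lemma exists_circuit (hmem : S.src α = S.vact g (S.src β)) (hlen : S.len β < S.len α)
    (hζ : S.FixedPt α g β ζ) :
    ∃ γ, S.src β = S.rng γ ∧ α = S.comp β γ ∧ 1 ≤ S.len γ ∧
      S.src γ = S.vact g (S.rng γ) ∧
      ∀ n, ζ (S.len β + n * S.len γ) = S.comp β (S.partConcat g γ n) := by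
  obtain ⟨-, ξ, hξ, hξ0, hβ, hα⟩ := hζ
  obtain ⟨m, hm⟩ := Nat.exists_eq_add_of_le hlen.le
  obtain ⟨γ, hγξ⟩ : ∃ γ, ξ m = γ := ⟨_, rfl⟩
  obtain rfl : S.len γ = m := hγξ ▸ hξ.1 m
  have hrngξ (n : ℕ) : S.rng (ξ n) = S.src β := by rw [hξ.rng_eq_rng_zero, hξ0]
  have hξ_zero : ξ 0 = S.vert (S.src β) := by rw [hξ.zero_eq_vert, hξ0]
  have hrngγ : S.src β = S.rng γ := hγξ ▸ (hrngξ _).symm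
  have hαβγ : α = S.comp β γ := by
    have hζα := hα 0
    rw [hξ_zero, S.act_vert, ← hmem, S.comp_vert_right, Nat.add_zero] at hζα
    rw [← hζα, hm, hβ, hγξ]
  have hγ : S.src γ = S.vact g (S.rng γ) := by
    rw [← hrngγ, ← hmem, hαβγ, S.src_comp _ _ hrngγ]
  have hγ_act (k : ℕ) : S.src γ = S.rng (S.act g (ξ k)) := by
    rw [S.rng_act, hrngξ, hγ, hrngγ]
  -- cancelling `β` in `βξ = α(g·ξ) = βγ(g·ξ)`
  have hshift (k : ℕ) : ξ (S.len γ + k) = S.comp γ (S.act g (ξ k)) := by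
    have hζk := hβ (S.len γ + k)
    rw [← Nat.add_assoc, ← hm, hα k, hαβγ, S.comp_assoc _ _ _ hrngγ (hγ_act k)] at hζk
    exact (S.comp_inj _ _ _ _ (by rw [S.rng_comp _ _ (hγ_act k), hrngγ]) (hrngξ _).symm rfl
      hζk).2.symm
  refine ⟨γ, hrngγ, hαβγ, by omega, hγ, fun n => ?_⟩
  rw [hβ, S.eq_partConcat_of_shift hγ (by rw [hξ_zero, hrngγ]) hshift]

end FixedPt

end SSG

/-- Let `s = (α, g, β) ∈ S_{G,E}` with `|α| > |β|`.  If `ζ` is a fixed point of `s`,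
then `β` is a prefix of `α`, say `α = βγ` with `(g, γ)` a `G`-circuit, and `ζ = βξ`
where `ξ = γ¹γ²γ³⋯` is the infinite path built from `(g, γ)` by `γ¹ = γ`, `g₁ = g`,
`γⁿ⁺¹ = gₙ·γⁿ`, `gₙ₊₁ = φ(gₙ, γⁿ)`.  In particular `s` has at most one fixed point. -/
theorem stmt17 {G V P : Type*} [Group G] (S : SSG G V P) (α β : P) (g : G)
    (hmem : S.src α = S.vact g (S.src β)) (hlen : S.len β < S.len α)
    (ζ : ℕ → P) (hζ : S.FixedPt α g β ζ) :
    (∃ γ, S.src β = S.rng γ ∧ α = S.comp β γ ∧ 1 ≤ S.len γ ∧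
      S.src γ = S.vact g (S.rng γ) ∧
      ∀ n, ζ (S.len β + n * S.len γ) = S.comp β (S.partConcat g γ n)) ∧
    (∀ ζ' : ℕ → P, S.FixedPt α g β ζ' → ζ' = ζ) := by
  obtain ⟨γ, hrngγ, hαβγ, hlenγ, hγ, hζγ⟩ := hζ.exists_circuit hmem hlen
  refine ⟨⟨γ, hrngγ, hαβγ, hlenγ, hγ, hζγ⟩, fun ζ' hζ' => ?_⟩
  obtain ⟨γ', hrngγ', hαβγ', -, -, hζ'γ'⟩ := hζ'.exists_circuit hmem hlen
  obtain rfl : γ = γ' := (S.comp_inj _ _ _ _ hrngγ hrngγ' rfl (hαβγ ▸ hαβγ')).2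
  refine hζ'.1.ext_of_unbounded hζ.1 fun n => ⟨S.len β + n * S.len γ, ?_, by rw [hζγ, hζ'γ']⟩
  exact le_add_left (Nat.le_mul_of_pos_right n hlenγ)
end

section
/- In the Katsura setting (ℤ acting on the graph E of A with cocycle φ determined by B via Euclidean division), the triple (ℤ, E, φ) is pseudo free (g·e = e and φ(g,e) = 0 imply g = 0, for edges e) if and only if B_{ij} ≠ 0 whenever A_{ij} ≥ 1. -/
/-- An edge `e_{i,j,n}` (with `0 ≤ n < A_{ij}`) of the graph of the matrix `A`,
going from vertex `j` to vertex `i`. -/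
structure KEdge (N : ℕ) (A : Fin N → Fin N → ℤ) where
  i : Fin N
  j : Fin N
  n : ℤ
  hn0 : 0 ≤ n
  hnA : n < A i j

/-- The Katsura action of `m ∈ ℤ` on an edge: `m·e_{i,j,n} = e_{i,j,n̂}` where
`m·B_{ij} + n = k̂·A_{ij} + n̂` with `0 ≤ n̂ < A_{ij}` (Euclidean division). -/
def edgeAct {N : ℕ} (A B : Fin N → Fin N → ℤ) (m : ℤ) (e : KEdge N A) : KEdge N A :=
  ⟨e.i, e.j, (m * B e.i e.j + e.n) % A e.i e.j,
    Int.emod_nonneg _ (ne_of_gt (lt_of_le_of_lt e.hn0 e.hnA)),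
    Int.emod_lt_of_pos _ (lt_of_le_of_lt e.hn0 e.hnA)⟩

/-- The Katsura cocycle: `φ(m, e_{i,j,n}) = k̂`, the quotient of the Euclidean
division of `m·B_{ij} + n` by `A_{ij}`. -/
def edgeCoc {N : ℕ} (A B : Fin N → Fin N → ℤ) (m : ℤ) (e : KEdge N A) : ℤ :=
  (m * B e.i e.j + e.n) / A e.i e.j

/-- The induced action of `m ∈ ℤ` on finite paths (lists of edges), determined
recursively by `m·(e·α') = (m·e)·(φ(m, e)·α')`. -/
def pathAct {N : ℕ} (A B : Fin N → Fin N → ℤ) : ℤ → List (KEdge N A) → List (KEdge N A)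
  | _, [] => []
  | m, e :: l => edgeAct A B m e :: pathAct A B (edgeCoc A B m e) l

section KatsuraEdge

variable {N : ℕ} {A : Fin N → Fin N → ℤ} (B : Fin N → Fin N → ℤ)

lemma KEdge.A_pos (e : KEdge N A) : 0 < A e.i e.j :=
  e.hn0.trans_lt e.hnA

lemma edgeAct_eq_self_of_B_eq_zero (m : ℤ) (e : KEdge N A) (hB : B e.i e.j = 0) :
    edgeAct A B m e = e := by
  obtain ⟨i, j, n, hn0, hnA⟩ := e
  simp only [edgeAct, KEdge.mk.injEq, true_and] at hB ⊢
  rw [hB, mul_zero, zero_add, Int.emod_eq_of_lt hn0 hnA]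

lemma edgeCoc_eq_zero_of_B_eq_zero (m : ℤ) (e : KEdge N A) (hB : B e.i e.j = 0) :
    edgeCoc A B m e = 0 := by
  rw [edgeCoc, hB, mul_zero, zero_add, Int.ediv_eq_zero_of_lt e.hn0 e.hnA]

lemma mul_B_eq_zero_of_edgeAct_eq_self {m : ℤ} {e : KEdge N A}
    (hact : edgeAct A B m e = e) (hcoc : edgeCoc A B m e = 0) : m * B e.i e.j = 0 := by
  have hmod : (m * B e.i e.j + e.n) % A e.i e.j = e.n := congrArg KEdge.n hact
  have hdiv := Int.mul_ediv_add_emod (m * B e.i e.j + e.n) (A e.i e.j)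
  rw [hmod, show (m * B e.i e.j + e.n) / A e.i e.j = 0 from hcoc, mul_zero, zero_add] at hdiv
  linarith

end KatsuraEdge

theorem stmt19_general {N : ℕ} (A B : Fin N → Fin N → ℤ) :
    (∀ (m : ℤ) (e : KEdge N A), edgeAct A B m e = e → edgeCoc A B m e = 0 → m = 0) ↔
      ∀ i j : Fin N, 1 ≤ A i j → B i j ≠ 0 := by
  constructor
  · intro hpf i j hAij hBij
    let e : KEdge N A := ⟨i, j, 0, le_rfl, hAij⟩
    exact one_ne_zero <| hpf 1 e (edgeAct_eq_self_of_B_eq_zero B 1 e hBij)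
      (edgeCoc_eq_zero_of_B_eq_zero B 1 e hBij)
  · intro hB m e hact hcoc
    have hmB := mul_B_eq_zero_of_edgeAct_eq_self B hact hcoc
    exact (mul_eq_zero.mp hmB).resolve_right (hB e.i e.j e.A_pos)

/-- (Lemma 18.5)  The Katsura triple `(ℤ, E, φ)` is pseudo free (i.e. `m·e = e` and
`φ(m, e) = 0` imply `m = 0`, for every edge `e`) if and only if `B_{ij} ≠ 0`
whenever `A_{ij} ≥ 1`. -/
theorem stmt19 {N : ℕ} (A B : Fin N → Fin N → ℤ)
    (hA : ∀ i j, 0 ≤ A i j)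
    (hArow : ∀ i, ∃ j, 1 ≤ A i j)
    (hB : ∀ i j, A i j = 0 → B i j = 0) :
    (∀ (m : ℤ) (e : KEdge N A), edgeAct A B m e = e → edgeCoc A B m e = 0 → m = 0) ↔
      ∀ i j : Fin N, 1 ≤ A i j → B i j ≠ 0 :=
  stmt19_general A B
end
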